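/- Let n ≥ 2 and q ≥ 2 be integers, 0 < α < n, let ℓ ≥ h ≥ 0 be integers, let j, k_1, …, k_{q−1} ∈ ℤ with k = min{k_1, …, k_{q−1}}, assume j − h < k − 2 < j − 2, and set r = j − k + ℓ − h. Then there is a constant C = C(n, q, α) such that for all (y,s), (y^1,s^1), …, (y^{q−1},s^{q−1}) ∈ ℝ^n × ℝ, ∬_{Λ_{ℓj}(y,s) ∩ ⋂_{i=1}^{q−1} Λ_{ℓ−h,k_i}(y^i,s^i)} Ω^α(x−y, t−s) ∏_{i=1}^{q−1} Ω^α(x−y^i, t−s^i) dx dt ≤ C 2^{(j−k−h)α/n} ∬_{Λ*_{rj}(y,s) ∩ ⋂_{i=1}^{q−1} Λ*_{ℓ−h,k_i}(y^i,s^i)} Ω^α(x−y, t−s) ∏_{i=1}^{q−1} Ω^α(x−y^i, t−s^i) dx dt. -/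

import Mathlib

open MeasureTheory ENNReal NNReal

noncomputable section

/-- `ℝ^{n+1}` as `ℝ^n × ℝ`. -/
abbrev Pt (n : ℕ) := EuclideanSpace ℝ (Fin n) × ℝ

/-- The open light cone `Λ = {(y,s) : |s| > |y|}`. -/
def lightCone (n : ℕ) : Set (Pt n) := {p | ‖p.1‖ < |p.2|}

/-- The integrand `f(x−y, t−s) (|s|+|y|)^{α−n} (|s|−|y|)^{α/n−1}`. -/
def ker (n : ℕ) (α : ℝ) (f : Pt n → ℝ) (z p : Pt n) : ℝ≥0∞ :=
  ENNReal.ofReal (f (z.1 - p.1, z.2 - p.2)) *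
    ENNReal.ofReal ((|p.2| + ‖p.1‖) ^ (α - n) * (|p.2| - ‖p.1‖) ^ (α / n - 1))

/-- The light-cone fractional integral `I_α f`. -/
def Iop (n : ℕ) (α : ℝ) (f : Pt n → ℝ) (z : Pt n) : ℝ≥0∞ :=
  ∫⁻ p in lightCone n, ker n α f z p

/-- The shifted cone shell `Λ_{ℓj}(x,t)`. -/
def shellAt (n : ℕ) (ℓ j : ℤ) (c : Pt n) : Set (Pt n) :=
  {p | (2:ℝ) ^ j ≤ |p.2 - c.2| + ‖p.1 - c.1‖ ∧ |p.2 - c.2| + ‖p.1 - c.1‖ < (2:ℝ) ^ (j + 1) ∧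
       (2:ℝ) ^ (j - ℓ) ≤ |p.2 - c.2| - ‖p.1 - c.1‖ ∧
       |p.2 - c.2| - ‖p.1 - c.1‖ < (2:ℝ) ^ (j - ℓ + 1)}

/-- The dyadic enlargement `Λ*_{ℓj}(x,t)`. -/
def shellStarAt (n : ℕ) (ℓ j : ℤ) (c : Pt n) : Set (Pt n) :=
  {p | (2:ℝ) ^ (j - 3) ≤ |p.2 - c.2| + ‖p.1 - c.1‖ ∧
       |p.2 - c.2| + ‖p.1 - c.1‖ < (2:ℝ) ^ (j + 3) ∧
       (2:ℝ) ^ (j - ℓ - 3) ≤ |p.2 - c.2| - ‖p.1 - c.1‖ ∧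
       |p.2 - c.2| - ‖p.1 - c.1‖ < (2:ℝ) ^ (j - ℓ + 3)}

/-- The cone shell `Λ_{ℓj}` (centered at the origin). -/
def shell (n : ℕ) (ℓ j : ℤ) : Set (Pt n) := shellAt n ℓ j 0

/-- The discrete dyadic cone `Λ_ℓ = ⋃_j Λ_{ℓj}`. -/
def Lam (n : ℕ) (ℓ : ℤ) : Set (Pt n) := ⋃ j : ℤ, shell n ℓ j

/-- The partial operator `Δ_{ℓj} I_α f`. -/
def Dlj (n : ℕ) (α : ℝ) (ℓ j : ℤ) (f : Pt n → ℝ) (z : Pt n) : ℝ≥0∞ :=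
  ∫⁻ p in shell n ℓ j, ker n α f z p

/-- The partial operator `Δ_ℓ I_α f`. -/
def Dl (n : ℕ) (α : ℝ) (ℓ : ℤ) (f : Pt n → ℝ) (z : Pt n) : ℝ≥0∞ :=
  ∫⁻ p in Lam n ℓ, ker n α f z p

/-- `θ_ℓ(x,t) = ‖f‖_p^{−p} ∬_{Λ_ℓ} f(x−y,t−s)^p dy ds`. -/
def theta (n : ℕ) (p : ℝ) (f : Pt n → ℝ) (ℓ : ℤ) (z : Pt n) : ℝ≥0∞ :=
  (∫⁻ w in Lam n ℓ, ENNReal.ofReal (f (z.1 - w.1, z.2 - w.2)) ^ p) /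
    eLpNorm f (ENNReal.ofReal p) volume ^ p

/-- The cone of directions `Γ^ν_η` with central direction `e`. -/
def coneDir (n η : ℕ) (e : EuclideanSpace ℝ (Fin n)) : Set (EuclideanSpace ℝ (Fin n)) :=
  {y | y ≠ 0 ∧ ‖(‖y‖⁻¹ • y) - e‖ ≤ 4 * (2:ℝ) ^ (-(η:ℝ))}

/-- The directional maximal operator `M^ν_η`. -/
def Mnu (n η : ℕ) (e : EuclideanSpace ℝ (Fin n)) (f : Pt n → ℝ) (z : Pt n) : ℝ≥0∞ :=
  ⨆ (ℓ : ℕ) (_ : ℓ ≤ η) (j : ℤ),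
    (ENNReal.ofReal ((2:ℝ) ^ j * (2:ℝ) ^ (j - (ℓ:ℤ)) * (2:ℝ) ^ ((j - (η:ℤ)) * ((n:ℤ) - 1))))⁻¹ *
      ∫⁻ p in {p : Pt n | p ∈ shell n ℓ j ∧ p.1 ∈ coneDir n η e},
        ENNReal.ofReal (f (z.1 - p.1, z.2 - p.2))

/-- The averaged maximal operator `M_η`. -/
def Meta (n η : ℕ) {ι : Type} [Fintype ι] (y : ι → EuclideanSpace ℝ (Fin n)) (f : Pt n → ℝ)
    (z : Pt n) : ℝ≥0∞ :=
  (ENNReal.ofReal ((2:ℝ) ^ ((η:ℤ) * ((n:ℤ) - 1))))⁻¹ * ∑ ν, Mnu n η (y ν) f z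

/-- `Ω^α(x,t) = (|t|+|x|)^{α−n} (|t|−|x|)^{α/n−1}`. -/
def Om (n : ℕ) (α : ℝ) (p : Pt n) : ℝ≥0∞ :=
  ENNReal.ofReal ((|p.2| + ‖p.1‖) ^ (α - n) * (|p.2| - ‖p.1‖) ^ (α / n - 1))



/-!
Fix `z = (x,t)` in the left-hand domain and push `t` away from `s` by `τ ∈ [τ₀, 2τ₀]`,
`τ₀ = 2^(k+h-ℓ-2)`. Then `|t-s| - |x-y|` grows from `≈ 2^(j-ℓ)` to `≈ 2^(k+h-ℓ)`, so the moved
point lies in `Λ*_{rj}(y,s)`, while for each `i` the move is small compared with `2^(kᵢ-ℓ+h)` and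
keeps the point in `Λ*_{ℓ-h,kᵢ}(yⁱ,sⁱ)`. Each factor `Ω^α(· - yⁱ)` changes by a bounded factor
and `Ω^α(· - y)` by at most `2^((k+h-j)(1-α/n))`. Averaging over `τ`, and using that every
vertical line meets `Λ_{ℓj}(y,s)` in length `≤ 2^(j-ℓ+1)`, gains the factor
`2^(j-ℓ+1)/τ₀ ≈ 2^(j-k-h)`, and `2^(j-k-h) · 2^((k+h-j)(1-α/n)) = 2^((j-k-h)α/n)`.
-/

lemma volume_abs_sub_mem_Ico_le (c a b : ℝ) :
    volume {t : ℝ | |t - c| ∈ Set.Ico a b} ≤ 2 * ENNReal.ofReal (b - a) := by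
  have hsub : {t : ℝ | |t - c| ∈ Set.Ico a b} ⊆
      Set.Ico (c + a) (c + b) ∪ Set.Ioc (c - b) (c - a) := by
    rintro t ⟨hat, htb⟩
    rcases le_or_gt c t with hct | hct
    · rw [abs_of_nonneg (sub_nonneg.2 hct)] at hat htb
      exact Or.inl ⟨by linarith, by linarith⟩
    · rw [abs_of_neg (sub_neg.2 hct)] at hat htb
      exact Or.inr ⟨by linarith, by linarith⟩
  calc volume {t : ℝ | |t - c| ∈ Set.Ico a b}
      ≤ volume (Set.Ico (c + a) (c + b)) + volume (Set.Ioc (c - b) (c - a)) :=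
        (measure_mono hsub).trans (measure_union_le _ _)
    _ = 2 * ENNReal.ofReal (b - a) := by
        rw [Real.volume_Ico, Real.volume_Ioc, two_mul]; ring_nf

lemma setLIntegral_comp_fst_le {X : Type*} [MeasurableSpace X] {μ : Measure X}
    {A : Set (X × ℝ)} (hA : MeasurableSet A) {L : ℝ≥0∞} (hL : L ≠ ∞)
    (hslice : ∀ x, volume {t | (x, t) ∈ A} ≤ L) (g : X → ℝ≥0∞) :
    ∫⁻ z in A, g z.1 ∂μ.prod volume ≤ L * ∫⁻ x, g x ∂μ := by
  rw [← lintegral_indicator hA]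
  calc ∫⁻ z, A.indicator (fun z => g z.1) z ∂μ.prod volume
      ≤ ∫⁻ x, ∫⁻ t, A.indicator (fun z => g z.1) (x, t) ∂volume ∂μ := lintegral_prod_le _
    _ ≤ ∫⁻ x, L * g x ∂μ := lintegral_mono fun x => ?_
    _ = L * ∫⁻ x, g x ∂μ := lintegral_const_mul' _ _ hL
  have hAx : MeasurableSet {t | (x, t) ∈ A} := measurable_prodMk_left hA
  calc ∫⁻ t, A.indicator (fun z => g z.1) (x, t)
      = ∫⁻ t in {t | (x, t) ∈ A}, g x := by rw [← lintegral_indicator hAx]; rfl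
    _ = g x * volume {t | (x, t) ∈ A} := setLIntegral_const _ _
    _ ≤ L * g x := by rw [mul_comm]; gcongr; exact hslice x

lemma mul_volume_le_two_mul_lintegral {G : ℝ → ℝ≥0∞} (hG : Measurable G) {s : Set ℝ}
    {t : ℝ} {b : ℝ≥0∞} (hb : ∀ τ ∈ s, b ≤ G (t + τ) + G (t - τ)) :
    b * volume s ≤ 2 * ∫⁻ w, G w := by
  calc b * volume s = ∫⁻ _ in s, b := (setLIntegral_const _ _).symm
    _ ≤ ∫⁻ τ in s, (G (t + τ) + G (t - τ)) := setLIntegral_mono (by fun_prop) hb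
    _ ≤ ∫⁻ τ, (G (t + τ) + G (t - τ)) := setLIntegral_le_lintegral _ _
    _ = 2 * ∫⁻ w, G w := by
      rw [lintegral_add_left (f := fun τ => G (t + τ)) (hG.comp (measurable_const_add t)),
        lintegral_add_left_eq_self, lintegral_sub_left_eq_self, two_mul]

lemma setLIntegral_le_of_le_vertical_shifts {X : Type*} [MeasurableSpace X] {μ : Measure X}
    [SFinite μ] {A B : Set (X × ℝ)} (hA : MeasurableSet A) (hB : MeasurableSet B)
    {F : X × ℝ → ℝ≥0∞} (hF : Measurable F) {L D τ₀ : ℝ} (hD : 0 ≤ D) (hτ₀ : 0 < τ₀)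
    (hslice : ∀ x, volume {t | (x, t) ∈ A} ≤ ENNReal.ofReal L)
    (hshift : ∀ z ∈ A, ∀ τ ∈ Set.Icc τ₀ (2 * τ₀),
      F z ≤ ENNReal.ofReal D * (B.indicator F (z.1, z.2 + τ) + B.indicator F (z.1, z.2 - τ))) :
    ∫⁻ z in A, F z ∂μ.prod volume ≤
      ENNReal.ofReal (2 * D * L / τ₀) * ∫⁻ z in B, F z ∂μ.prod volume := by
  set G := B.indicator F
  have hG : Measurable G := hF.indicator hB
  have hpoint : ∀ z ∈ A,
      ENNReal.ofReal τ₀ * F z ≤ 2 * ENNReal.ofReal D * ∫⁻ w, G (z.1, w) := fun z hz => by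
    have h := mul_volume_le_two_mul_lintegral
      (G := fun w => ENNReal.ofReal D * G (z.1, w)) (by fun_prop)
      (fun τ hτ => (hshift z hz τ hτ).trans_eq (mul_add _ _ _))
    rwa [Real.volume_Icc, show 2 * τ₀ - τ₀ = τ₀ by ring, lintegral_const_mul _ (by fun_prop),
      mul_comm, ← mul_assoc] at h
  have hmul : ENNReal.ofReal τ₀ * ∫⁻ z in A, F z ∂μ.prod volume ≤
      ENNReal.ofReal (2 * D * L) * ∫⁻ z in B, F z ∂μ.prod volume := by
    calc ENNReal.ofReal τ₀ * ∫⁻ z in A, F z ∂μ.prod volume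
        = ∫⁻ z in A, ENNReal.ofReal τ₀ * F z ∂μ.prod volume :=
          (lintegral_const_mul _ hF).symm
      _ ≤ ∫⁻ z in A, 2 * ENNReal.ofReal D * (∫⁻ w, G (z.1, w)) ∂μ.prod volume :=
          setLIntegral_mono' hA hpoint
      _ ≤ 2 * ENNReal.ofReal D * (ENNReal.ofReal L * ∫⁻ x, (∫⁻ w, G (x, w)) ∂μ) := by
          rw [lintegral_const_mul' _ _ (by finiteness)]
          gcongr
          exact setLIntegral_comp_fst_le hA ENNReal.ofReal_ne_top hslice _
      _ = ENNReal.ofReal (2 * D * L) * ∫⁻ z in B, F z ∂μ.prod volume := by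
          rw [← lintegral_prod _ hG.aemeasurable, lintegral_indicator hB,
            ENNReal.ofReal_mul (by positivity), ENNReal.ofReal_mul zero_le_two,
            ENNReal.ofReal_ofNat, mul_assoc, mul_assoc, mul_assoc]
  rw [ENNReal.ofReal_div_of_pos hτ₀, ← ENNReal.mul_div_right_comm,
    ENNReal.le_div_iff_mul_le (by simp [hτ₀]) (by simp), mul_comm]
  exact hmul

lemma Om_le_ofReal_mul_Om {n : ℕ} {α : ℝ} (hαn : α ≤ n) {p p' : Pt n} {K : ℝ} (hK : 0 < K)
    (hv' : 0 < |p'.2| - ‖p'.1‖) (hu : |p'.2| + ‖p'.1‖ ≤ 2 * (|p.2| + ‖p.1‖))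
    (hv : |p'.2| - ‖p'.1‖ ≤ K * (|p.2| - ‖p.1‖)) :
    Om n α p ≤ ENNReal.ofReal (2 ^ ((n : ℝ) - α) * K ^ (1 - α / n)) * Om n α p' := by
  have hu' : 0 < |p'.2| + ‖p'.1‖ := by linarith [norm_nonneg p'.1]
  have hv0 : 0 < |p.2| - ‖p.1‖ := pos_of_mul_pos_right (hv'.trans_le hv) hK.le
  have hαn' : α / n - 1 ≤ 0 := sub_nonpos.2 (div_le_one_of_le₀ hαn (Nat.cast_nonneg n))
  have hu_le :
      (|p.2| + ‖p.1‖) ^ (α - n) ≤ 2 ^ ((n : ℝ) - α) * (|p'.2| + ‖p'.1‖) ^ (α - n) := by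
    calc (|p.2| + ‖p.1‖) ^ (α - n) ≤ ((|p'.2| + ‖p'.1‖) / 2) ^ (α - n) :=
          Real.rpow_le_rpow_of_nonpos (half_pos hu') (by linarith) (by linarith)
      _ = _ := by
          rw [Real.div_rpow hu'.le zero_le_two, div_eq_inv_mul, ← Real.rpow_neg zero_le_two,
            neg_sub]
  have hv_le : (|p.2| - ‖p.1‖) ^ (α / n - 1) ≤
      K ^ (1 - α / n) * (|p'.2| - ‖p'.1‖) ^ (α / n - 1) := by
    calc (|p.2| - ‖p.1‖) ^ (α / n - 1) ≤ ((|p'.2| - ‖p'.1‖) / K) ^ (α / n - 1) :=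
          Real.rpow_le_rpow_of_nonpos (div_pos hv' hK) (by rwa [div_le_iff₀' hK]) hαn'
      _ = _ := by
          rw [Real.div_rpow hv'.le hK.le, div_eq_inv_mul, ← Real.rpow_neg hK.le, neg_sub]
  unfold Om
  rw [← ENNReal.ofReal_mul (by positivity)]
  refine ENNReal.ofReal_le_ofReal ?_
  calc (|p.2| + ‖p.1‖) ^ (α - n) * (|p.2| - ‖p.1‖) ^ (α / n - 1)
      ≤ (2 ^ ((n : ℝ) - α) * (|p'.2| + ‖p'.1‖) ^ (α - n)) *
          (K ^ (1 - α / n) * (|p'.2| - ‖p'.1‖) ^ (α / n - 1)) :=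
        mul_le_mul hu_le hv_le (Real.rpow_nonneg hv0.le _) (by positivity)
    _ = _ := by ring

lemma abs_coneCoords_sub_le {n : ℕ} (c p p' : Pt n) :
    |(|p'.2 - c.2| + ‖p'.1 - c.1‖) - (|p.2 - c.2| + ‖p.1 - c.1‖)| ≤
        |p'.2 - p.2| + ‖p'.1 - p.1‖ ∧
      |(|p'.2 - c.2| - ‖p'.1 - c.1‖) - (|p.2 - c.2| - ‖p.1 - c.1‖)| ≤
        |p'.2 - p.2| + ‖p'.1 - p.1‖ := by
  have ht := abs_abs_sub_abs_le_abs_sub (p'.2 - c.2) (p.2 - c.2)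
  have hx := abs_norm_sub_norm_le (p'.1 - c.1) (p.1 - c.1)
  rw [sub_sub_sub_cancel_right, abs_le] at ht hx
  rw [abs_le, abs_le]
  constructor <;> constructor <;> linarith

section Displacement

variable {n : ℕ} {ℓ j : ℤ} {c p p' : Pt n}

lemma mem_shellStarAt_of_dist_le (hℓ : 0 ≤ ℓ) (hp : p ∈ shellAt n ℓ j c)
    (hd : |p'.2 - p.2| + ‖p'.1 - p.1‖ ≤ 2 ^ (j - ℓ - 1)) : p' ∈ shellStarAt n ℓ j c := by
  obtain ⟨hu, hv⟩ := abs_coneCoords_sub_le c p p'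
  obtain ⟨h₁, h₂, h₃, h₄⟩ := hp
  have hℓ' : (2:ℝ) ^ (j - ℓ) ≤ 2 ^ j := zpow_le_zpow_right₀ one_le_two (by omega)
  have h2 : (2:ℝ) ≠ 0 := two_ne_zero
  -- Splitting every `2 ^ (a ± b)` makes all dyadic bounds linear in `2 ^ j` and `2 ^ j / 2 ^ ℓ`.
  simp only [shellStarAt, Set.mem_ofPred_eq, zpow_add₀ h2, zpow_sub₀ h2, abs_le]
    at h₁ h₂ h₃ h₄ hd hℓ' hu hv ⊢
  norm_num at h₂ h₄ hd ⊢
  refine ⟨?_, ?_, ?_, ?_⟩ <;> linarith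

lemma Om_le_of_dist_le {α : ℝ} (hαn : α ≤ n) (hℓ : 0 ≤ ℓ) (hp : p ∈ shellAt n ℓ j c)
    (hd : |p'.2 - p.2| + ‖p'.1 - p.1‖ ≤ 2 ^ (j - ℓ - 1)) :
    Om n α (p.1 - c.1, p.2 - c.2) ≤
      ENNReal.ofReal (2 ^ ((n : ℝ) - α) * 2 ^ (1 - α / n)) *
        Om n α (p'.1 - c.1, p'.2 - c.2) := by
  obtain ⟨hu, hv⟩ := abs_coneCoords_sub_le c p p'
  obtain ⟨h₁, -, h₃, -⟩ := hp
  have hℓ' : (2:ℝ) ^ (j - ℓ) ≤ 2 ^ j := zpow_le_zpow_right₀ one_le_two (by omega)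
  have hpos : (0:ℝ) < 2 ^ (j - ℓ) := zpow_pos two_pos _
  have h2 : (2:ℝ) ≠ 0 := two_ne_zero
  simp only [zpow_sub₀ h2, abs_le] at h₁ h₃ hd hℓ' hpos hu hv
  norm_num at hd
  exact Om_le_ofReal_mul_Om hαn two_pos (by dsimp only; linarith) (by dsimp only; linarith)
    (by dsimp only; linarith)

end Displacement

lemma exists_abs_sub_eq_abs_sub_add (t c τ : ℝ) (hτ : 0 ≤ τ) :
    ∃ t', (t' = t + τ ∨ t' = t - τ) ∧ |t' - c| = |t - c| + τ := by
  rcases le_total c t with hct | htc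
  · refine ⟨t + τ, Or.inl rfl, ?_⟩
    rw [abs_of_nonneg (by linarith), abs_of_nonneg (by linarith)]; ring
  · refine ⟨t - τ, Or.inr rfl, ?_⟩
    rw [abs_of_nonpos (by linarith), abs_of_nonpos (by linarith)]; ring

section OutwardShift

variable {n : ℕ} {ℓ r j : ℤ} {c z : Pt n} {t' τ : ℝ}

lemma mem_shellStarAt_of_outward_shift (hr : 0 ≤ r) (hrℓ : r + 3 ≤ ℓ)
    (hz : z ∈ shellAt n ℓ j c) (ht' : |t' - c.2| = |z.2 - c.2| + τ)
    (hτ : τ ∈ Set.Icc ((2:ℝ) ^ (j - r - 2)) (2 * 2 ^ (j - r - 2))) :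
    (z.1, t') ∈ shellStarAt n r j c := by
  obtain ⟨h₁, h₂, h₃, h₄⟩ := hz
  obtain ⟨hτ₁, hτ₂⟩ := hτ
  have hr' : (2:ℝ) ^ (j - r) ≤ 2 ^ j := zpow_le_zpow_right₀ one_le_two (by omega)
  have hℓ' : (2:ℝ) ^ (j - ℓ + 3) ≤ 2 ^ (j - r) := zpow_le_zpow_right₀ one_le_two (by omega)
  have h2 : (2:ℝ) ≠ 0 := two_ne_zero
  simp only [shellStarAt, Set.mem_ofPred_eq, ht', zpow_add₀ h2, zpow_sub₀ h2]
    at h₁ h₂ h₃ h₄ hτ₁ hτ₂ hr' hℓ' ⊢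
  norm_num at h₂ h₄ hτ₁ hτ₂ hℓ' ⊢
  refine ⟨?_, ?_, ?_, ?_⟩ <;> linarith

lemma Om_le_of_outward_shift {α : ℝ} (hαn : α ≤ n) (hr : 0 ≤ r) (hrℓ : r + 3 ≤ ℓ)
    (hz : z ∈ shellAt n ℓ j c) (ht' : |t' - c.2| = |z.2 - c.2| + τ)
    (hτ : τ ∈ Set.Icc ((2:ℝ) ^ (j - r - 2)) (2 * 2 ^ (j - r - 2))) :
    Om n α (z.1 - c.1, z.2 - c.2) ≤
      ENNReal.ofReal (2 ^ ((n : ℝ) - α) * ((2:ℝ) ^ (ℓ - r)) ^ (1 - α / n)) *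
        Om n α (z.1 - c.1, t' - c.2) := by
  obtain ⟨h₁, -, h₃, -⟩ := hz
  obtain ⟨hτ₁, hτ₂⟩ := hτ
  have hK : (2:ℝ) ≤ 2 ^ (ℓ - r) := by
    simpa using zpow_le_zpow_right₀ (one_le_two (α := ℝ)) (show (1:ℤ) ≤ ℓ - r by omega)
  have hv : 0 < |z.2 - c.2| - ‖z.1 - c.1‖ := (_root_.zpow_pos two_pos _).trans_le h₃
  have hKv : (2:ℝ) ^ (j - r) ≤ 2 ^ (ℓ - r) * (|z.2 - c.2| - ‖z.1 - c.1‖) := by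
    calc (2:ℝ) ^ (j - r) = 2 ^ (ℓ - r) * 2 ^ (j - ℓ) := by
          rw [← zpow_add₀ two_ne_zero]; ring_nf
      _ ≤ _ := by gcongr
  have hr' : (2:ℝ) ^ (j - r) ≤ 2 ^ j := zpow_le_zpow_right₀ one_le_two (by omega)
  have h2 : (2:ℝ) ≠ 0 := two_ne_zero
  simp only [zpow_sub₀ h2 (j - r)] at hτ₂
  refine Om_le_ofReal_mul_Om hαn (by positivity) ?_ ?_ ?_ <;> dsimp only <;> rw [ht']
  · linarith [hτ₁.trans' (_root_.zpow_pos two_pos _).le]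
  · linarith [_root_.zpow_pos (two_pos (α := ℝ)) j]
  · linarith [mul_le_mul_of_nonneg_right hK hv.le]

end OutwardShift

lemma measurableSet_shellAt (n : ℕ) (ℓ j : ℤ) (c : Pt n) :
    MeasurableSet (shellAt n ℓ j c) := by
  unfold shellAt; measurability

lemma measurableSet_shellStarAt (n : ℕ) (ℓ j : ℤ) (c : Pt n) :
    MeasurableSet (shellStarAt n ℓ j c) := by
  unfold shellStarAt; measurability

lemma measurable_Om_sub (n : ℕ) (α : ℝ) (c : Pt n) :
    Measurable fun z : Pt n => Om n α (z.1 - c.1, z.2 - c.2) := by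
  unfold Om; fun_prop

lemma volume_slice_shellAt_le (n : ℕ) (ℓ j : ℤ) (c : Pt n) (x : EuclideanSpace ℝ (Fin n)) :
    volume {t | (x, t) ∈ shellAt n ℓ j c} ≤ ENNReal.ofReal (2 * 2 ^ (j - ℓ)) := by
  calc volume {t | (x, t) ∈ shellAt n ℓ j c}
      ≤ volume {t : ℝ | |t - c.2| ∈
          Set.Ico (2 ^ (j - ℓ) + ‖x - c.1‖) (2 ^ (j - ℓ + 1) + ‖x - c.1‖)} :=
        measure_mono fun t ⟨_, _, h₃, h₄⟩ => ⟨by linarith, by linarith⟩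
    _ ≤ 2 * ENNReal.ofReal ((2 ^ (j - ℓ + 1) + ‖x - c.1‖) - (2 ^ (j - ℓ) + ‖x - c.1‖)) :=
        volume_abs_sub_mem_Ico_le _ _ _
    _ = ENNReal.ofReal (2 * 2 ^ (j - ℓ)) := by
        rw [ENNReal.ofReal_mul zero_le_two, ENNReal.ofReal_ofNat, zpow_add_one₀ two_ne_zero]
        ring_nf

def OmProd (n : ℕ) (α : ℝ) {q : ℕ} (c : Pt n) (ci : Fin q → Pt n) (z : Pt n) : ℝ≥0∞ :=
  Om n α (z.1 - c.1, z.2 - c.2) * ∏ i, Om n α (z.1 - (ci i).1, z.2 - (ci i).2)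

lemma measurable_OmProd (n : ℕ) (α : ℝ) {q : ℕ} (c : Pt n) (ci : Fin q → Pt n) :
    Measurable (OmProd n α c ci) :=
  (measurable_Om_sub n α c).mul
    (Finset.measurable_prod _ fun i _ => measurable_Om_sub n α (ci i))

lemma OmProd_le_outward_shift {n : ℕ} {α : ℝ} (hαn : α ≤ n) {q : ℕ} {ℓ ℓ' r j : ℤ}
    {κ : Fin q → ℤ} {c : Pt n} {ci : Fin q → Pt n} (hr : 0 ≤ r) (hrℓ : r + 3 ≤ ℓ)
    (hℓ' : 0 ≤ ℓ') (hκ : ∀ i, j - r ≤ κ i - ℓ') {z : Pt n}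
    (hz : z ∈ shellAt n ℓ j c ∩ ⋂ i, shellAt n ℓ' (κ i) (ci i)) {τ : ℝ}
    (hτ : τ ∈ Set.Icc ((2:ℝ) ^ (j - r - 2)) (2 * 2 ^ (j - r - 2))) :
    OmProd n α c ci z ≤
      ENNReal.ofReal (2 ^ ((n : ℝ) - α) * (2 ^ ((n : ℝ) - α) * 2 ^ (1 - α / n)) ^ q *
        ((2:ℝ) ^ (ℓ - r)) ^ (1 - α / n)) *
      ((shellStarAt n r j c ∩ ⋂ i, shellStarAt n ℓ' (κ i) (ci i)).indicator (OmProd n α c ci)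
          (z.1, z.2 + τ) +
        (shellStarAt n r j c ∩ ⋂ i, shellStarAt n ℓ' (κ i) (ci i)).indicator (OmProd n α c ci)
          (z.1, z.2 - τ)) := by
  obtain ⟨hzc, hzi⟩ := hz
  rw [Set.mem_iInter] at hzi
  have hτ₀ : 0 ≤ τ := (_root_.zpow_pos two_pos _).le.trans hτ.1
  obtain ⟨t', ht'τ, ht'⟩ := exists_abs_sub_eq_abs_sub_add z.2 c.2 τ hτ₀
  have hd : ∀ i, |(z.1, t').2 - z.2| + ‖(z.1, t').1 - z.1‖ ≤ 2 ^ (κ i - ℓ' - 1) := fun i => by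
    have hshift : |t' - z.2| = τ := by
      rcases ht'τ with rfl | rfl <;> simp [abs_of_nonneg hτ₀]
    dsimp only
    rw [sub_self, norm_zero, add_zero, hshift]
    calc τ ≤ 2 * 2 ^ (j - r - 2) := hτ.2
      _ = 2 ^ (j - r - 1) := by rw [← zpow_one_add₀ two_ne_zero]; ring_nf
      _ ≤ 2 ^ (κ i - ℓ' - 1) := zpow_le_zpow_right₀ one_le_two (by linarith [hκ i])
  have hmem : (z.1, t') ∈ shellStarAt n r j c ∩ ⋂ i, shellStarAt n ℓ' (κ i) (ci i) :=
    ⟨mem_shellStarAt_of_outward_shift hr hrℓ hzc ht' hτ,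
      Set.mem_iInter.2 fun i => mem_shellStarAt_of_dist_le hℓ' (hzi i) (hd i)⟩
  have hle : OmProd n α c ci z ≤
      ENNReal.ofReal (2 ^ ((n : ℝ) - α) * (2 ^ ((n : ℝ) - α) * 2 ^ (1 - α / n)) ^ q *
        ((2:ℝ) ^ (ℓ - r)) ^ (1 - α / n)) * OmProd n α c ci (z.1, t') := by
    calc OmProd n α c ci z
        ≤ (ENNReal.ofReal (2 ^ ((n : ℝ) - α) * ((2:ℝ) ^ (ℓ - r)) ^ (1 - α / n)) *
            Om n α (z.1 - c.1, t' - c.2)) *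
          ∏ i, (ENNReal.ofReal (2 ^ ((n : ℝ) - α) * 2 ^ (1 - α / n)) *
            Om n α (z.1 - (ci i).1, t' - (ci i).2)) :=
          mul_le_mul' (Om_le_of_outward_shift (t' := t') hαn hr hrℓ hzc ht' hτ)
            (Finset.prod_le_prod' fun i _ =>
              Om_le_of_dist_le (p' := (z.1, t')) hαn hℓ' (hzi i) (hd i))
      _ = ENNReal.ofReal (2 ^ ((n : ℝ) - α)) *
            ENNReal.ofReal (2 ^ ((n : ℝ) - α) * 2 ^ (1 - α / n)) ^ q *
            ENNReal.ofReal (((2:ℝ) ^ (ℓ - r)) ^ (1 - α / n)) * OmProd n α c ci (z.1, t') := by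
          rw [Finset.prod_mul_distrib, Finset.prod_const, Finset.card_univ, Fintype.card_fin,
            OmProd, ENNReal.ofReal_mul (q := ((2:ℝ) ^ (ℓ - r)) ^ (1 - α / n)) (by positivity)]
          ring
      _ = _ := by
          rw [← ENNReal.ofReal_pow (by positivity), ← ENNReal.ofReal_mul (by positivity),
            ← ENNReal.ofReal_mul (by positivity)]
  rw [← Set.indicator_of_mem hmem (OmProd n α c ci)] at hle
  rcases ht'τ with rfl | rfl
  · exact hle.trans (mul_le_mul_right le_self_add _)
  · exact hle.trans (mul_le_mul_right le_add_self _)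

lemma two_mul_mul_zpow_rpow_div_eq (M s : ℝ) (ℓ r j : ℤ) :
    2 * (M * ((2:ℝ) ^ (ℓ - r)) ^ (1 - s)) * (2 * 2 ^ (j - ℓ)) / 2 ^ (j - r - 2) =
      16 * M * 2 ^ (((r : ℝ) - ℓ) * s) := by
  have hK : ((2:ℝ) ^ (ℓ - r)) ^ (1 - s) = 2 ^ (ℓ - r) * 2 ^ (((r : ℝ) - ℓ) * s) := by
    rw [← Real.rpow_intCast, ← Real.rpow_mul zero_le_two, ← Real.rpow_add two_pos]
    push_cast; ring_nf
  have h2 : (2:ℝ) ≠ 0 := two_ne_zero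
  rw [hK]
  simp only [zpow_sub₀ h2]
  field_simp
  ring

theorem stmt16_general (n : ℕ) (q : ℕ) (α : ℝ) (hαn : α < n) :
    ∃ C : ℝ≥0, 0 < C ∧ ∀ (ℓ h : ℤ), 0 ≤ h → h ≤ ℓ →
      ∀ (j k : ℤ) (κ : Fin (q - 1) → ℤ), (∀ i, k ≤ κ i) → (∃ i, κ i = k) →
      j - h < k - 2 → k - 2 < j - 2 →
      ∀ (c : Pt n) (ci : Fin (q - 1) → Pt n),
        (∫⁻ z in shellAt n ℓ j c ∩ ⋂ i, shellAt n (ℓ - h) (κ i) (ci i),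
          Om n α (z.1 - c.1, z.2 - c.2) *
            ∏ i, Om n α (z.1 - (ci i).1, z.2 - (ci i).2)) ≤
        C * ENNReal.ofReal ((2:ℝ) ^ (((j:ℝ) - k - h) * (α / n))) *
          ∫⁻ z in shellStarAt n (j - k + ℓ - h) j c ∩
              ⋂ i, shellStarAt n (ℓ - h) (κ i) (ci i),
            Om n α (z.1 - c.1, z.2 - c.2) *
              ∏ i, Om n α (z.1 - (ci i).1, z.2 - (ci i).2) := by
  set M : ℝ := 2 ^ ((n : ℝ) - α) * (2 ^ ((n : ℝ) - α) * 2 ^ (1 - α / n)) ^ (q - 1)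
  refine ⟨(16 * M).toNNReal, Real.toNNReal_pos.2 (by positivity), ?_⟩
  intro ℓ h h₀ hhℓ j k κ hκ _ hjh hkj c ci
  have key := setLIntegral_le_of_le_vertical_shifts (μ := volume)
    ((measurableSet_shellAt n ℓ j c).inter
      (.iInter fun i => measurableSet_shellAt n (ℓ - h) (κ i) (ci i)))
    ((measurableSet_shellStarAt n (j - k + ℓ - h) j c).inter
      (.iInter fun i => measurableSet_shellStarAt n (ℓ - h) (κ i) (ci i)))
    (measurable_OmProd n α c ci) (by positivity) (_root_.zpow_pos two_pos _)
    (fun x => (measure_mono fun t ht => ht.1).trans (volume_slice_shellAt_le n ℓ j c x))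
    (fun z hz τ hτ => OmProd_le_outward_shift hαn.le (by omega) (by omega) (by omega)
      (fun i => by linarith [hκ i]) hz hτ)
  have hexp : (((j - k + ℓ - h : ℤ) : ℝ) - ℓ) * (α / n) = ((j : ℝ) - k - h) * (α / n) := by
    push_cast; ring
  rw [← Measure.volume_eq_prod, two_mul_mul_zpow_rpow_div_eq, hexp,
    ENNReal.ofReal_mul (by positivity)] at key
  exact key

theorem stmt16 (n : ℕ) (hn : 2 ≤ n) (q : ℕ) (hq : 2 ≤ q) (α : ℝ) (hα0 : 0 < α)
    (hαn : α < n) :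
    ∃ C : ℝ≥0, 0 < C ∧ ∀ (ℓ h : ℤ), 0 ≤ h → h ≤ ℓ →
      ∀ (j k : ℤ) (κ : Fin (q - 1) → ℤ), (∀ i, k ≤ κ i) → (∃ i, κ i = k) →
      j - h < k - 2 → k - 2 < j - 2 →
      ∀ (c : Pt n) (ci : Fin (q - 1) → Pt n),
        (∫⁻ z in shellAt n ℓ j c ∩ ⋂ i, shellAt n (ℓ - h) (κ i) (ci i),
          Om n α (z.1 - c.1, z.2 - c.2) *
            ∏ i, Om n α (z.1 - (ci i).1, z.2 - (ci i).2)) ≤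
        C * ENNReal.ofReal ((2:ℝ) ^ (((j:ℝ) - k - h) * (α / n))) *
          ∫⁻ z in shellStarAt n (j - k + ℓ - h) j c ∩
              ⋂ i, shellStarAt n (ℓ - h) (κ i) (ci i),
            Om n α (z.1 - c.1, z.2 - c.2) *
              ∏ i, Om n α (z.1 - (ci i).1, z.2 - (ci i).2) :=
  stmt16_general n q α hαn
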